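/- arXiv:1809.01227 — 4 statements merged into one kernel-verified Lean document; each statement's English description precedes it below -/
import Mathlib

section
/- If G is a graph on n ≥ 3 vertices with minimum degree δ(G) ≥ (n+1)/2, then G is Hamiltonian-connected, i.e., every pair of distinct vertices is joined by a Hamiltonian path. -/
open SimpleGraph Finset Matrix

variable {V : Type*} [Fintype V] [DecidableEq V]

def SimpleGraph.IsHamiltonianConnected (G : SimpleGraph V) : Prop :=
  ∀ u v : V, u ≠ v → ∃ p : G.Walk u v, p.IsHamiltonian

def SimpleGraph.IsTraceable (G : SimpleGraph V) : Prop :=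
  ∃ (u v : V) (p : G.Walk u v), p.IsHamiltonian

def SimpleGraph.IsHomogeneouslyTraceable (G : SimpleGraph V) : Prop :=
  ∀ u : V, ∃ (v : V) (p : G.Walk u v), p.IsHamiltonian

/-- `G` is `k`-connected: more than `k` vertices, and removing fewer than `k`
vertices leaves a connected graph. -/
def SimpleGraph.IsKConnected (G : SimpleGraph V) (k : ℕ) : Prop :=
  k < Fintype.card V ∧
    ∀ S : Finset V, S.card < k → (G.induce ((↑S : Set V)ᶜ)).Connected

def SimpleGraph.IsIndependentSet (G : SimpleGraph V) (s : Finset V) : Prop :=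
  ∀ u ∈ s, ∀ v ∈ s, ¬ G.Adj u v

noncomputable def lapHerm (G : SimpleGraph V) [DecidableRel G.Adj] :
    (G.lapMatrix ℝ).IsHermitian := (G.posSemidef_lapMatrix ℝ).1

/-- Laplacian spectral radius μ₁. -/
noncomputable def lapSpecRad (G : SimpleGraph V) [DecidableRel G.Adj] : ℝ :=
  ⨆ i, (lapHerm G).eigenvalues i

noncomputable def adjHerm (G : SimpleGraph V) [DecidableRel G.Adj] :
    (G.adjMatrix ℝ).IsHermitian := by
  rw [Matrix.IsHermitian, conjTranspose_eq_transpose_of_trivial, isSymm_adjMatrix]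

/-- Adjacency spectral radius λ₁. -/
noncomputable def adjSpecRad (G : SimpleGraph V) [DecidableRel G.Adj] : ℝ :=
  ⨆ i, (adjHerm G).eigenvalues i

/-- Smallest adjacency eigenvalue λ_n. -/
noncomputable def adjSpecMin (G : SimpleGraph V) [DecidableRel G.Adj] : ℝ :=
  ⨅ i, (adjHerm G).eigenvalues i

/-- The join `K₁ ∇ G`: a new universal vertex added to `G`. -/
def joinK1 (G : SimpleGraph V) : SimpleGraph (Option V) where
  Adj a b := match a, b with
    | none, none => False
    | none, some _ => True
    | some _, none => True
    | some u, some v => G.Adj u v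
  symm := ⟨by rintro (_|u) (_|v) h <;> simp_all [G.adj_symm]⟩
  loopless := ⟨by rintro (_|u) h <;> simp_all⟩

/-!
Adjoin to `G` a new vertex adjacent exactly to `u` and `v`: Hamiltonian `u`–`v` paths of `G` are
the Hamiltonian cycles of the new graph `H`, cut open at the new vertex. Replacing `G` by the
complete graph gives a graph `K ≥ H` with such a cycle, and the edges of `K` missing from `H`
can be removed one at a time (Bondy–Chvátal): if `H' + ab` has a Hamiltonian cycle and
`deg a + deg b ≥ |V(H')|` in `H'`, then either the cycle avoids `ab`, or removing `ab` leaves a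
Hamiltonian path from `a` to `b` in `H'`; on such a path there are, by pigeonhole, consecutive
vertices `x, y` with `b ~ x` and `a ~ y`, and then `a … x b … y a` is a Hamiltonian cycle (Ore).
All missing edges join two old vertices, whose degree sum is at least `2δ ≥ n + 1 = |V(H)|`.
-/

theorem Cycle.exists_eq_coe_cons_of_mem {α : Type*} {s : Cycle α} {x : α} (hx : x ∈ s) :
    ∃ l : List α, s = ↑(x :: l) := by
  obtain ⟨l, rfl⟩ : ∃ l : List α, (l : Cycle α) = s := Quotient.exists_rep s
  obtain ⟨l₁, l₂, rfl⟩ := List.mem_iff_append.1 (Cycle.mem_coe_iff.1 hx)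
  exact ⟨l₂ ++ l₁, Cycle.coe_eq_coe.2 List.isRotated_append⟩

theorem Cycle.reverse_coe_cons {α : Type*} (x : α) (l : List α) :
    (↑(x :: l) : Cycle α).reverse = ↑(x :: l.reverse) := by
  rw [Cycle.reverse_coe, List.reverse_cons, ← Cycle.coe_cons_eq_coe_append]

theorem List.exists_eq_append_cons_cons_of_countP {α : Type*} {p q : α → Bool} :
    ∀ {l : List α}, l.length - 1 < l.dropLast.countP p + l.tail.countP q →
      ∃ l₁ x y l₂, l = l₁ ++ x :: y :: l₂ ∧ p x ∧ q y
  | [], h | [_], h => by simp at h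
  | x :: y :: l, h => by
    by_cases hxy : p x ∧ q y
    · exact ⟨[], x, y, l, rfl, hxy⟩
    have ih := exists_eq_append_cons_cons_of_countP (p := p) (q := q) (l := y :: l)
    simp only [dropLast_cons_cons, tail_cons, countP_cons, length_cons] at h ih
    obtain ⟨l₁, a, b, l₂, hl, hab⟩ := ih (by grind)
    exact ⟨x :: l₁, a, b, l₂, by simp [hl], hab⟩

theorem List.Nodup.length_eq_card {α : Type*} [Fintype α] {l : List α} (hl : l.Nodup)
    (hmem : ∀ x, x ∈ l) : l.length = Fintype.card α := by
  classical
  have : l.toFinset = Finset.univ := Finset.eq_univ_of_forall (by simpa using hmem)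
  rw [← List.toFinset_card_of_nodup hl, this, Finset.card_univ]

theorem List.exists_eq_map_some {α : Type*} : ∀ {l : List (Option α)}, none ∉ l →
    ∃ M : List α, l = M.map some
  | [], _ => ⟨[], rfl⟩
  | none :: _, h => absurd List.mem_cons_self h
  | some x :: l, h => by
    obtain ⟨M, rfl⟩ := exists_eq_map_some (l := l) (by simpa using h)
    exact ⟨x :: M, rfl⟩

theorem SimpleGraph.Walk.IsHamiltonian.reverse {W : Type*} {G : SimpleGraph W} [DecidableEq W]
    {u v : W} {p : G.Walk u v} (hp : p.IsHamiltonian) : p.reverse.IsHamiltonian := fun a => by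
  simpa [Walk.support_reverse, List.count_reverse] using hp a

namespace SimpleGraph

variable {W : Type*}

section HamCycle

-- On two vertices this accepts a single edge traversed twice.
def IsHamCycle (H : SimpleGraph W) (s : Cycle W) : Prop :=
  s.Nodup ∧ (∀ x, x ∈ s) ∧ s.Chain H.Adj

variable {H : SimpleGraph W}

theorem isHamCycle_coe_cons {x : W} {l : List W} :
    H.IsHamCycle ↑(x :: l) ↔
      (x :: l).Nodup ∧ (∀ y, y ∈ x :: l) ∧ (x :: (l ++ [x])).IsChain H.Adj := by
  simp only [IsHamCycle, Cycle.nodup_coe_iff, Cycle.mem_coe_iff, Cycle.chain_coe_cons]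

theorem IsHamCycle.reverse {s : Cycle W} (hs : H.IsHamCycle s) : H.IsHamCycle s.reverse := by
  obtain ⟨l, rfl⟩ : ∃ l : List W, (l : Cycle W) = s := Quotient.exists_rep s
  rcases l with - | ⟨x, l⟩
  · exact hs
  rw [Cycle.reverse_coe_cons]
  obtain ⟨hnd, hmem, hchain⟩ := isHamCycle_coe_cons.1 hs
  refine isHamCycle_coe_cons.2 ⟨by simpa using hnd, by simpa using hmem, ?_⟩
  have : x :: (l.reverse ++ [x]) = (x :: (l ++ [x])).reverse := by simp
  rw [this, List.isChain_reverse]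
  exact hchain.imp fun _ _ h => h.symm

theorem countP_adj_eq_degree [Fintype W] [DecidableRel H.Adj] {l : List W} (hl : l.Nodup)
    {x : W} (hx : ∀ y, H.Adj x y → y ∈ l) : l.countP (H.Adj x ·) = H.degree x := by
  classical
  rw [List.countP_eq_length_filter, ← List.toFinset_card_of_nodup (hl.filter _),
    ← card_neighborFinset_eq_degree]
  congr 1
  ext y
  simpa using fun h => hx y h

theorem exists_isHamCycle_of_isChain_of_card_le_degree_add [Fintype W] [DecidableRel H.Adj]
    {c d : W} {l : List W}
    (hnd : (c :: l).Nodup) (hmem : ∀ x, x ∈ c :: l) (hchain : (c :: l).IsChain H.Adj)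
    (hd : (c :: l).getLast? = some d) (hdeg : Fintype.card W ≤ H.degree c + H.degree d) :
    ∃ s, H.IsHamCycle s := by
  have hlen := hnd.length_eq_card hmem
  have hcount_c : l.countP (H.Adj c ·) = H.degree c :=
    countP_adj_eq_degree (List.nodup_cons.1 hnd).2 fun y hy =>
      (List.mem_cons.1 (hmem y)).resolve_left (H.ne_of_adj hy).symm
  have hcount_d : (c :: l).dropLast.countP (H.Adj d ·) = H.degree d := by
    refine countP_adj_eq_degree (hnd.sublist (List.dropLast_sublist _)) fun y hy => ?_
    have := hmem y
    rw [← List.dropLast_append_getLast? d hd] at this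
    simpa [(H.ne_of_adj hy).symm] using this
  -- Pigeonhole over the consecutive pairs `(x, y)` of the path: `d ~ x` and `c ~ y` for one.
  obtain ⟨l₁, x, y, l₂, hsplit, hdx, hcy⟩ := List.exists_eq_append_cons_cons_of_countP
    (p := (H.Adj d ·)) (q := (H.Adj c ·)) (l := c :: l)
    (by simp only [List.length_cons, List.tail_cons] at hlen ⊢; omega)
  simp only [decide_eq_true_eq] at hdx hcy
  have hperm : (y :: (l₁ ++ x :: l₂.reverse)).Perm (c :: l) := by
    rw [hsplit]
    exact (((List.reverse_perm l₂).cons x).append_left l₁).cons y |>.trans <|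
      List.perm_middle.symm.trans ((List.Perm.swap x y l₂).append_left l₁)
  refine ⟨↑(y :: (l₁ ++ x :: l₂.reverse)), isHamCycle_coe_cons.2
    ⟨hperm.nodup_iff.2 hnd, fun z => hperm.mem_iff.2 (hmem z), ?_⟩⟩
  have hc : (l₁ ++ [x]).head? = some c := by cases l₁ <;> simp_all
  have hd : (y :: l₂).getLast? = some d := by simpa [hsplit] using hd
  rw [hsplit, List.isChain_append_cons_cons] at hchain
  have : y :: (l₁ ++ x :: l₂.reverse ++ [y]) = y :: (l₁ ++ [x]) ++ (y :: l₂).reverse := by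
    simp
  rw [this, List.isChain_append, List.isChain_cons, List.isChain_reverse, List.head?_reverse,
    hc, hd]
  refine ⟨⟨by simpa using hcy.symm, hchain.1⟩, hchain.2.2.imp fun _ _ h => h.symm, ?_⟩
  rw [← List.cons_append, List.getLast?_concat]
  simpa using hdx.symm

theorem exists_isHamCycle_of_isChain_sup_edge [Fintype W] [DecidableRel H.Adj] {a b : W}
    {l : List W} (hnd : (b :: l).Nodup) (hmem : ∀ x, x ∈ b :: l)
    (hchain : (b :: (l ++ [b])).IsChain (H ⊔ edge a b).Adj) (ha : l.head? ≠ some a)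
    (hdeg : Fintype.card W ≤ H.degree a + H.degree b) : ∃ s, H.IsHamCycle s := by
  obtain rfl | ⟨l, g, rfl⟩ := l.eq_nil_or_concat'
  · simp at hchain
  have hb : b ∉ l ++ [g] := (List.nodup_cons.1 hnd).1
  have hH : ∀ {x y}, (H ⊔ edge a b).Adj x y → ¬H.Adj x y →
      x = a ∧ y = b ∨ x = b ∧ y = a := by
    intro x y h h'
    simp only [sup_adj, edge_adj, h', false_or] at h
    exact h.1
  have hpath : (b :: (l ++ [g])).IsChain H.Adj := by
    rw [List.isChain_cons] at hchain ⊢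
    refine ⟨fun y hy => ?_, (hchain.2.prefix (List.prefix_append _ _)).imp_of_mem_imp ?_⟩
    · rw [List.head?_append_of_ne_nil _ (by simp)] at hchain
      by_contra h
      rcases hH (hchain.1 y hy) h with ⟨-, rfl⟩ | ⟨-, rfl⟩
      · exact hb (List.mem_of_mem_head? hy)
      · exact ha hy
    · intro x y hx hy hxy
      by_contra h
      rcases hH hxy h with ⟨-, rfl⟩ | ⟨rfl, -⟩ <;> contradiction
  by_cases hgb : H.Adj g b
  · refine ⟨↑(b :: (l ++ [g])), isHamCycle_coe_cons.2 ⟨hnd, hmem, ?_⟩⟩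
    rw [← List.cons_append, List.isChain_append]
    simpa [hpath, List.getLast?_cons] using hgb
  · obtain rfl : g = a := by
      have : (H ⊔ edge a b).Adj g b := by
        rw [← List.cons_append, ← List.cons_append, List.isChain_append] at hchain
        simpa [List.getLast?_cons] using hchain.2.2
      rcases hH this hgb with h | ⟨rfl, -⟩
      · exact h.1
      · simp at hb
    exact exists_isHamCycle_of_isChain_of_card_le_degree_add (d := g) hnd hmem hpath
      (by simp [List.getLast?_cons]) (by omega)

theorem exists_isHamCycle_of_isHamCycle_sup_edge [Fintype W] [DecidableRel H.Adj] {a b : W}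
    (hcard : 3 ≤ Fintype.card W) (hdeg : Fintype.card W ≤ H.degree a + H.degree b)
    {s : Cycle W} (hs : (H ⊔ edge a b).IsHamCycle s) : ∃ s, H.IsHamCycle s := by
  obtain ⟨l, rfl⟩ := Cycle.exists_eq_coe_cons_of_mem (hs.2.1 b)
  -- Orient the cycle so that it does not leave `b` towards `a`; this needs a third vertex.
  by_cases ha : l.head? = some a
  · have hs' := hs.reverse
    rw [Cycle.reverse_coe_cons] at hs'
    obtain ⟨hnd, hmem, hchain⟩ := isHamCycle_coe_cons.1 hs'
    refine exists_isHamCycle_of_isChain_sup_edge hnd hmem hchain ?_ hdeg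
    obtain ⟨t, rfl⟩ := List.head?_eq_some_iff.1 ha
    have hlen := hnd.length_eq_card hmem
    obtain rfl | ⟨t, z, rfl⟩ := t.eq_nil_or_concat'
    · simp at hlen
      omega
    · simp_all
  · obtain ⟨hnd, hmem, hchain⟩ := isHamCycle_coe_cons.1 hs
    exact exists_isHamCycle_of_isChain_sup_edge hnd hmem hchain ha hdeg

theorem exists_isHamCycle_of_le [Fintype W] [DecidableRel H.Adj] (hcard : 3 ≤ Fintype.card W)
    {K : SimpleGraph W} (hHK : H ≤ K)
    (hdeg : ∀ a b, K.Adj a b → ¬H.Adj a b → Fintype.card W ≤ H.degree a + H.degree b)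
    (hK : ∃ s, K.IsHamCycle s) : ∃ s, H.IsHamCycle s := by
  induction K using WellFoundedLT.induction with
  | _ K ih =>
  by_cases hKH : K ≤ H
  · obtain ⟨s, hs⟩ := hK
    exact ⟨s, le_antisymm hKH hHK ▸ hs⟩
  obtain ⟨a, b, hab, hnab⟩ : ∃ a b, K.Adj a b ∧ ¬H.Adj a b := by
    simpa [le_iff_adj] using hKH
  classical
  have hedge : edge a b ≤ K := (edge_le_iff K).2 (.inr hab)
  have hlt : K \ edge a b < K := sdiff_lt hedge fun h => by
    simpa [edge_adj, hab.ne] using congr_arg (·.Adj a b) h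
  have hle : H ≤ K \ edge a b := le_sdiff.2 ⟨hHK, (disjoint_edge H).2 hnab⟩
  refine ih _ hlt hle (fun x y hxy => hdeg x y (hlt.le hxy)) ?_
  obtain ⟨s, hs⟩ := hK
  rw [← sdiff_sup_cancel hedge] at hs
  refine exists_isHamCycle_of_isHamCycle_sup_edge hcard ?_ hs
  have := hdeg a b hab hnab
  have := degree_le_of_le (v := a) hle
  have := degree_le_of_le (v := b) hle
  omega

end HamCycle

section AdjoinVertex

def adjoinVertex (G : SimpleGraph W) (u v : W) : SimpleGraph (Option W) where
  Adj a b := match a, b with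
    | none, none => False
    | none, some x => x = u ∨ x = v
    | some x, none => x = u ∨ x = v
    | some x, some y => G.Adj x y
  symm := ⟨by
    rintro (_ | x) (_ | y) h
    exacts [h, h, h, G.adj_symm h]⟩
  loopless := ⟨by
    rintro (_ | x) h
    exacts [h, G.loopless.irrefl x h]⟩

variable {G : SimpleGraph W} {u v : W}

@[simp]
theorem adjoinVertex_adj_none_some {x : W} :
    (G.adjoinVertex u v).Adj none (some x) ↔ x = u ∨ x = v := Iff.rfl

@[simp]
theorem adjoinVertex_adj_some_none {x : W} :
    (G.adjoinVertex u v).Adj (some x) none ↔ x = u ∨ x = v := Iff.rfl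

theorem adjoinVertex_comm : G.adjoinVertex u v = G.adjoinVertex v u := by
  ext (_ | x) (_ | y) <;> simp [adjoinVertex, or_comm]

theorem adjoinVertex_mono {G' : SimpleGraph W} (h : G ≤ G') :
    G.adjoinVertex u v ≤ G'.adjoinVertex u v := by
  rintro (_ | x) (_ | y) hxy
  exacts [hxy, hxy, hxy, h hxy]

theorem degree_le_degree_adjoinVertex [Fintype W] [DecidableRel G.Adj] {x : W}
    [Fintype ((G.adjoinVertex u v).neighborSet (some x))] :
    G.degree x ≤ (G.adjoinVertex u v).degree (some x) := by
  simp_rw [← card_neighborSet_eq_degree]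
  exact Fintype.card_le_of_injective (fun y => ⟨some y.1, y.2⟩) fun y z h => by
    simpa [Subtype.ext_iff] using h

theorem isHamCycle_adjoinVertex {l : List W} (hnd : (u :: (l ++ [v])).Nodup)
    (hmem : ∀ x, x ∈ u :: (l ++ [v])) (hchain : (u :: (l ++ [v])).IsChain G.Adj) :
    (G.adjoinVertex u v).IsHamCycle ↑(none :: (u :: (l ++ [v])).map some) := by
  refine isHamCycle_coe_cons.2 ⟨?_, ?_, ?_⟩
  · exact List.nodup_cons.2 ⟨by simp, hnd.map (Option.some_injective W)⟩
  · rintro (_ | x)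
    · exact List.mem_cons_self
    · simpa using hmem x
  · rw [List.isChain_cons, List.isChain_append, List.isChain_map]
    refine ⟨by simp, hchain, List.isChain_singleton _, ?_⟩
    simp [List.getLast?_cons]

theorem exists_isHamiltonian_of_isHamCycle_adjoinVertex_cons [DecidableEq W] (huv : u ≠ v)
    {l : List W} (hs : (G.adjoinVertex u v).IsHamCycle ↑(none :: (u :: l).map some)) :
    ∃ p : G.Walk u v, p.IsHamiltonian := by
  obtain ⟨hnd, hmem, hchain⟩ := isHamCycle_coe_cons.1 hs
  have hnd' : (u :: l).Nodup :=
    (List.nodup_map_iff (Option.some_injective W)).1 (List.nodup_cons.1 hnd).2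
  have hmem' : ∀ x, x ∈ u :: l := fun x => by simpa using hmem (some x)
  rw [List.isChain_cons, List.isChain_append, List.isChain_map] at hchain
  obtain ⟨-, hpath, -, hlast⟩ := hchain
  replace hpath : (u :: l).IsChain G.Adj := hpath
  have hv : (u :: l).getLast (List.cons_ne_nil u l) = v := by
    have : (G.adjoinVertex u v).Adj (some ((u :: l).getLast (List.cons_ne_nil u l))) none :=
      hlast _ (by rw [List.getLast?_map, List.getLast?_eq_some_getLast (List.cons_ne_nil u l)]; rfl)
        none rfl
    refine this.resolve_left fun hu => huv ?_
    obtain ⟨x, hx⟩ := (hnd'.head_eq_getLast_iff (List.cons_ne_nil u l)).1 hu.symm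
    obtain ⟨rfl, rfl⟩ := List.cons_eq_cons.1 hx
    simpa [eq_comm] using hmem' v
  refine ⟨(Walk.ofSupport (u :: l) (List.cons_ne_nil u l) hpath).copy List.head_cons hv,
    fun x => ?_⟩
  simp only [Walk.support_copy, Walk.support_ofSupport]
  exact List.count_eq_one_of_mem hnd' (hmem' x)

theorem exists_isHamiltonian_of_isHamCycle_adjoinVertex [DecidableEq W] (huv : u ≠ v)
    {s : Cycle (Option W)} (hs : (G.adjoinVertex u v).IsHamCycle s) :
    ∃ p : G.Walk u v, p.IsHamiltonian := by
  obtain ⟨T, rfl⟩ := Cycle.exists_eq_coe_cons_of_mem (hs.2.1 none)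
  obtain ⟨M, rfl⟩ := List.exists_eq_map_some (List.nodup_cons.1 (isHamCycle_coe_cons.1 hs).1).1
  obtain ⟨-, hmem, hchain⟩ := isHamCycle_coe_cons.1 hs
  obtain _ | ⟨x, M⟩ := M
  · simpa using hmem (some u)
  rcases hchain.rel with rfl | rfl
  · exact exists_isHamiltonian_of_isHamCycle_adjoinVertex_cons huv hs
  · rw [adjoinVertex_comm] at hs
    obtain ⟨p, hp⟩ := exists_isHamiltonian_of_isHamCycle_adjoinVertex_cons huv.symm hs
    exact ⟨p.reverse, hp.reverse⟩

theorem exists_isHamCycle_adjoinVertex_top [Fintype W] [DecidableEq W] (huv : u ≠ v) :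
    ∃ s, ((⊤ : SimpleGraph W).adjoinVertex u v).IsHamCycle s := by
  have hnd : (u :: (({u, v}ᶜ : Finset W).toList ++ [v])).Nodup := by
    rw [List.nodup_cons, List.nodup_append]
    simp [huv, Finset.nodup_toList]
  refine ⟨_, isHamCycle_adjoinVertex hnd (fun x => ?_) hnd.isChain⟩
  by_cases hx : x = u ∨ x = v
  · rcases hx with rfl | rfl <;> simp
  · simp_all

end AdjoinVertex

end SimpleGraph

theorem SimpleGraph.isHamiltonianConnected_of_card_lt_degree_add (G : SimpleGraph V)
    [DecidableRel G.Adj]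
    (h : ∀ x y, x ≠ y → ¬G.Adj x y → Fintype.card V < G.degree x + G.degree y) :
    G.IsHamiltonianConnected := by
  classical
  intro u v huv
  have hcard : 3 ≤ Fintype.card (Option V) := by
    have := Fintype.one_lt_card_iff.2 ⟨u, v, huv⟩
    rw [Fintype.card_option]
    omega
  have hdeg : ∀ a b, ((⊤ : SimpleGraph V).adjoinVertex u v).Adj a b →
      ¬(G.adjoinVertex u v).Adj a b →
      Fintype.card (Option V) ≤
        (G.adjoinVertex u v).degree a + (G.adjoinVertex u v).degree b := by
    rintro (_ | x) (_ | y) hK hH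
    · exact hK.elim
    · exact (hH hK).elim
    · exact (hH hK).elim
    have := h x y hK hH
    have := degree_le_degree_adjoinVertex (G := G) (u := u) (v := v) (x := x)
    have := degree_le_degree_adjoinVertex (G := G) (u := u) (v := v) (x := y)
    rw [Fintype.card_option]
    omega
  obtain ⟨s, hs⟩ := exists_isHamCycle_of_le hcard (adjoinVertex_mono le_top) hdeg
    (exists_isHamCycle_adjoinVertex_top huv)
  exact exists_isHamiltonian_of_isHamCycle_adjoinVertex huv hs

theorem dirac_hamiltonian_connected_general (G : SimpleGraph V) [DecidableRel G.Adj]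
    (hδ : ((Fintype.card V : ℝ) + 1) / 2 ≤ (G.minDegree : ℝ)) :
    G.IsHamiltonianConnected := by
  have hδ' : Fintype.card V + 1 ≤ 2 * G.minDegree := by
    have : (Fintype.card V : ℝ) + 1 ≤ 2 * G.minDegree := by linarith
    exact_mod_cast this
  refine G.isHamiltonianConnected_of_card_lt_degree_add fun x y _ _ => ?_
  have := G.minDegree_le_degree x
  have := G.minDegree_le_degree y
  omega

theorem dirac_hamiltonian_connected (G : SimpleGraph V) [DecidableRel G.Adj]
    (hn : 3 ≤ Fintype.card V)
    (hδ : ((Fintype.card V : ℝ) + 1) / 2 ≤ (G.minDegree : ℝ)) :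
    G.IsHamiltonianConnected :=
  dirac_hamiltonian_connected_general G hδ
end

section
/- If G is a graph on n ≥ 3 vertices with minimum degree δ(G) ≥ n/2, then G is Hamiltonian. -/
open SimpleGraph Finset Matrix

variable {V : Type*} [Fintype V] [DecidableEq V]

/-!
Take a longest path `u ⋯ v`. All neighbours of `u` and of `v` lie on it, and since
`deg u + deg v ≥ n` exceeds its number of edges, some edge `x y` of the path has `u ~ y` and
`v ~ x`; rotating at that edge closes the path into a cycle one edge longer than any path.
Two non-adjacent vertices have a common neighbour, so `G` is connected, and a vertex off the
cycle would then extend it to a path longer than the longest one; hence the cycle is Hamiltonian.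
-/

namespace SimpleGraph

variable {V : Type*} {G : SimpleGraph V}

namespace Walk

variable {u v : V}

lemma exists_eq_append_cons_getVert (p : G.Walk u v) {i : ℕ} (hi : i < p.length) :
    ∃ (x y : V) (q : G.Walk u x) (hxy : G.Adj x y) (r : G.Walk y v),
      p = q.append (cons hxy r) ∧ x = p.getVert i ∧ y = p.getVert (i + 1) := by
  induction p generalizing i with
  | nil => simp at hi
  | cons h p ih =>
    cases i with
    | zero => exact ⟨_, _, nil, h, p, rfl, rfl, by simp⟩
    | succ i =>
      obtain ⟨x, y, q, hxy, r, rfl, hx, hy⟩ := ih (by simpa using hi)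
      exact ⟨x, y, cons h q, hxy, r, rfl, by simpa using hx, by simpa using hy⟩

/-- Pósa rotation: `u ⋯ x y ⋯ v` with chords `u y`, `v x` is the cycle `u y ⋯ v x ⋯ u`. -/
lemma IsPath.isCycle_cons_append_cons_reverse {x y : V} {q : G.Walk u x} {hxy : G.Adj x y}
    {r : G.Walk y v} (hp : (q.append (cons hxy r)).IsPath)
    (hlen : 2 ≤ (q.append (cons hxy r)).length) (huy : G.Adj u y) (hvx : G.Adj v x) :
    (cons huy (r.append (cons hvx q.reverse))).IsCycle := by
  have hperm : (r.append (cons hvx q.reverse)).support.Perm (q.append (cons hxy r)).support := by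
    simp only [support_append, support_cons, support_reverse, List.tail_cons]
    exact (List.perm_append_comm).trans ((List.reverse_perm _).append_right _)
  have hpath : (r.append (cons hvx q.reverse)).IsPath :=
    IsPath.mk' (hperm.nodup_iff.mpr hp.support_nodup)
  refine (cons_isCycle_iff _ _).mpr ⟨hpath, fun hmem => ?_⟩
  have := hpath.length_eq_one_of_mem_edges (Sym2.eq_swap ▸ hmem)
  simp only [length_append, length_cons, length_reverse] at this hlen
  omega

lemma IsPath.exists_isCycle_length_eq_add_one {p : G.Walk u v} (hp : p.IsPath)
    (hlen : 2 ≤ p.length) {i : ℕ} (hi : i < p.length) (hu : G.Adj u (p.getVert (i + 1)))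
    (hv : G.Adj v (p.getVert i)) :
    ∃ c : G.Walk u u, c.IsCycle ∧ c.length = p.length + 1 := by
  obtain ⟨x, y, q, hxy, r, rfl, hx, hy⟩ := p.exists_eq_append_cons_getVert hi
  rw [← hx] at hv
  rw [← hy] at hu
  refine ⟨_, hp.isCycle_cons_append_cons_reverse hlen hu hv, ?_⟩
  simp only [length_cons, length_append, length_reverse]
  omega

lemma IsPath.mem_support_of_adj_of_forall_length_le {w : V} {p : G.Walk u v} (hp : p.IsPath)
    (hmax : ∀ a b (q : G.Walk a b), q.IsPath → q.length ≤ p.length) (huw : G.Adj u w) :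
    w ∈ p.support := by
  by_contra hw
  simpa using hmax _ _ (cons huw.symm p) (hp.cons hw)

lemma IsCycle.mem_support_of_forall_isPath_length_lt {a : V} {c : G.Walk a a} (hc : c.IsCycle)
    (hG : G.Preconnected) (hmax : ∀ b d (q : G.Walk b d), q.IsPath → q.length < c.length)
    (w : V) : w ∈ c.support := by
  classical
  by_contra hw
  obtain ⟨d, -, hs, ht⟩ := (hG w a).some.exists_boundary_dart {x | x ∉ c.support} hw
    (by simp [c.start_mem_support])
  simp only [Set.mem_ofPred_eq, not_not] at hs ht
  set c' := c.rotate d.snd ht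
  have hc' : c'.IsCycle := hc.rotate ht
  have hs' : d.fst ∉ c'.tail.reverse.support := by
    rw [support_reverse, List.mem_reverse, support_tail_of_not_nil _ hc'.not_nil]
    exact fun h => hs ((mem_support_rotate_iff c _ ht).mp (List.mem_of_mem_tail h))
  have := hmax _ _ _ (hc'.isPath_tail.reverse.cons hs' (h := d.adj))
  rw [length_cons, length_reverse, length_tail_add_one hc'.not_nil, length_rotate] at this
  exact lt_irrefl _ this

lemma IsCycle.isHamiltonianCycle_of_forall_mem_support [DecidableEq V] {a : V} {c : G.Walk a a}
    (hc : c.IsCycle) (h : ∀ w, w ∈ c.support) : c.IsHamiltonianCycle := by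
  refine ⟨hc, hc.isPath_tail.isHamiltonian_of_mem fun w => ?_⟩
  rcases List.mem_cons.mp (c.cons_support_tail hc.not_nil ▸ h w) with rfl | hw
  exacts [c.tail.end_mem_support, hw]

section Degree

variable [Fintype V] [DecidableRel G.Adj]

lemma degree_le_card_filter_adj_getVert_succ {p : G.Walk u v}
    (hN : ∀ w, G.Adj u w → w ∈ p.support) :
    G.degree u ≤ #{i ∈ range p.length | G.Adj u (p.getVert (i + 1))} := by
  classical
  rw [← card_neighborFinset_eq_degree]
  refine (card_le_card fun w hw => ?_).trans
    (card_image_le (f := fun i => p.getVert (i + 1)))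
  rw [mem_neighborFinset] at hw
  obtain ⟨k, rfl, hk⟩ := mem_support_iff_exists_getVert.mp (hN _ hw)
  obtain ⟨j, rfl⟩ : ∃ j, k = j + 1 :=
    Nat.exists_eq_succ_of_ne_zero (by rintro rfl; simp at hw)
  exact mem_image.mpr ⟨j, mem_filter.mpr ⟨mem_range.mpr (by omega), hw⟩, rfl⟩

lemma degree_le_card_filter_adj_getVert {p : G.Walk u v}
    (hN : ∀ w, G.Adj v w → w ∈ p.support) :
    G.degree v ≤ #{i ∈ range p.length | G.Adj v (p.getVert i)} := by
  classical
  rw [← card_neighborFinset_eq_degree]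
  refine (card_le_card fun w hw => ?_).trans (card_image_le (f := p.getVert))
  rw [mem_neighborFinset] at hw
  obtain ⟨k, rfl, hk⟩ := mem_support_iff_exists_getVert.mp (hN _ hw)
  have hkl : k ≠ p.length := by rintro rfl; simp at hw
  exact mem_image.mpr ⟨k, mem_filter.mpr ⟨mem_range.mpr (by omega), hw⟩, rfl⟩

lemma IsPath.exists_adj_getVert_succ_adj_getVert {p : G.Walk u v} (hp : p.IsPath)
    (hNu : ∀ w, G.Adj u w → w ∈ p.support) (hNv : ∀ w, G.Adj v w → w ∈ p.support)
    (hdeg : Fintype.card V ≤ G.degree u + G.degree v) :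
    ∃ i < p.length, G.Adj u (p.getVert (i + 1)) ∧ G.Adj v (p.getVert i) := by
  set A := {i ∈ range p.length | G.Adj u (p.getVert (i + 1))}
  set B := {i ∈ range p.length | G.Adj v (p.getVert i)}
  have hA : G.degree u ≤ #A := degree_le_card_filter_adj_getVert_succ hNu
  have hB : G.degree v ≤ #B := degree_le_card_filter_adj_getVert hNv
  have hAB : #(A ∪ B) ≤ #(range p.length) :=
    card_le_card (union_subset (filter_subset _ _) (filter_subset _ _))
  have hinter : (A ∩ B).Nonempty := by
    have := card_union_add_card_inter A B
    have := hp.length_lt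
    rw [card_range] at hAB
    rw [← card_pos]
    omega
  obtain ⟨i, hi⟩ := hinter
  simp only [A, B, mem_inter, mem_filter, mem_range] at hi
  exact ⟨i, hi.1.1, hi.1.2, hi.2.2⟩

end Degree

end Walk

section Degree

variable [Fintype V] [DecidableRel G.Adj]

lemma exists_adj_adj_of_card_le_degree_add_degree {a b : V} (hab : ¬G.Adj a b)
    (hdeg : Fintype.card V ≤ G.degree a + G.degree b) : ∃ w, G.Adj a w ∧ G.Adj b w := by
  classical
  have hsub : G.neighborFinset a ∪ G.neighborFinset b ⊆ univ.erase a := fun w hw => by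
    simp only [mem_union, mem_neighborFinset] at hw
    exact mem_erase.mpr ⟨by rintro rfl; exact hw.elim G.irrefl fun h => hab h.symm, mem_univ w⟩
  have hinter : (G.neighborFinset a ∩ G.neighborFinset b).Nonempty := by
    have hcard := card_union_add_card_inter (G.neighborFinset a) (G.neighborFinset b)
    have hunion := (card_le_card hsub).trans_lt (card_erase_lt_of_mem (mem_univ a))
    rw [card_neighborFinset_eq_degree, card_neighborFinset_eq_degree] at hcard
    rw [card_univ] at hunion
    rw [← card_pos]
    omega
  obtain ⟨w, hw⟩ := hinter
  rw [mem_inter, mem_neighborFinset, mem_neighborFinset] at hw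
  exact ⟨w, hw⟩

lemma preconnected_of_card_le_degree_add_degree
    (h : ∀ a b, a ≠ b → ¬G.Adj a b → Fintype.card V ≤ G.degree a + G.degree b) :
    G.Preconnected := by
  intro a b
  obtain rfl | hne := eq_or_ne a b
  · rfl
  by_cases hab : G.Adj a b
  · exact hab.reachable
  obtain ⟨w, haw, hbw⟩ := exists_adj_adj_of_card_le_degree_add_degree hab (h a b hne hab)
  exact haw.reachable.trans hbw.symm.reachable

end Degree

lemma exists_isPath_forall_length_le [Finite V] [Nonempty V] (G : SimpleGraph V) :
    ∃ (u v : V) (p : G.Walk u v), p.IsPath ∧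
      ∀ a b (q : G.Walk a b), q.IsPath → q.length ≤ p.length := by
  classical
  have := Fintype.ofFinite V
  obtain ⟨w⟩ := ‹Nonempty V›
  have : Nonempty (Σ u v : V, G.Path u v) := ⟨⟨w, w, Path.nil⟩⟩
  obtain ⟨⟨u, v, p, hp⟩, hmax⟩ :=
    Finite.exists_max fun q : Σ u v : V, G.Path u v => q.2.2.1.length
  exact ⟨u, v, p, hp, fun a b q hq => hmax ⟨a, b, q, hq⟩⟩

end SimpleGraph

theorem dirac_hamiltonian (G : SimpleGraph V) [DecidableRel G.Adj]
    (hn : 3 ≤ Fintype.card V)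
    (hδ : (Fintype.card V : ℝ) / 2 ≤ (G.minDegree : ℝ)) :
    G.IsHamiltonian := by
  have hdeg (w : V) : Fintype.card V ≤ 2 * G.degree w := by
    have : Fintype.card V ≤ 2 * G.minDegree := by
      exact_mod_cast (by linarith : (Fintype.card V : ℝ) ≤ 2 * G.minDegree)
    have := G.minDegree_le_degree w
    omega
  have hG : G.Preconnected :=
    preconnected_of_card_le_degree_add_degree fun a b _ _ => by linarith [hdeg a, hdeg b]
  have : Nonempty V := Fintype.card_pos_iff.mp (by omega)
  obtain ⟨u, v, p, hp, hmax⟩ := G.exists_isPath_forall_length_le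
  have hNu (w : V) (h : G.Adj u w) : w ∈ p.support :=
    hp.mem_support_of_adj_of_forall_length_le hmax h
  have hNv (w : V) (h : G.Adj v w) : w ∈ p.support := by
    simpa using hp.reverse.mem_support_of_adj_of_forall_length_le (by simpa using hmax) h
  have hlen : 2 ≤ p.length := by
    have := (Walk.degree_le_card_filter_adj_getVert_succ hNu).trans (card_filter_le _ _)
    have := hdeg u
    rw [card_range] at *
    omega
  obtain ⟨i, hi, hu, hv⟩ :=
    hp.exists_adj_getVert_succ_adj_getVert hNu hNv (by linarith [hdeg u, hdeg v])
  obtain ⟨c, hc, hclen⟩ := hp.exists_isCycle_length_eq_add_one hlen hi hu hv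
  refine fun _ => ⟨u, c, hc.isHamiltonianCycle_of_forall_mem_support ?_⟩
  exact hc.mem_support_of_forall_isPath_length_lt hG fun a b q hq =>
    hclen ▸ Nat.lt_succ_of_le (hmax a b q hq)
end

section
/- If G is a k-connected graph on n ≥ 3 vertices and the independence number α(G) ≤ k - 1, then G is Hamiltonian-connected. -/
open SimpleGraph Finset Matrix

variable {V : Type*} [Fintype V] [DecidableEq V]

/-
Take a longest `u`–`v` path `L`. If a vertex `w` is missed, let `H` be the vertices reachable
from `w` off `L` and `A` the vertices of `L` with a neighbour in `H`. Rerouting `L` through `H`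
shows that no two consecutive vertices of `L` lie in `A`, and that the successors of two vertices
of `A` are non-adjacent (traverse `H` between them, then the segment between the successors
backwards). The first fact leaves a vertex of `L` outside `A`, which `H` cannot reach in
`G - A`; so `G - A` is disconnected and `#A ≥ k`. The second makes `w` together with the successors of `A \ {v}` an
independent set of size `≥ #A ≥ k`, contradicting `α(G) ≤ k - 1`.
-/

namespace List

variable {α : Type*} {L : List α} {a a' b b' : α}

theorem exists_isInfix_pair_of_mem (ha : a ∈ L) (hlast : L.getLast? ≠ some a) :
    ∃ b, [a, b] <:+: L := by
  obtain ⟨s, t, rfl⟩ := append_of_mem ha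
  cases t with
  | nil => simp at hlast
  | cons b t => exact ⟨b, s, t, by simp⟩

theorem exists_split_of_cons_cons_eq {X t₁ t₂ : List α} (h : a :: a' :: t₁ = X ++ b :: b' :: t₂)
    (hne : [a, a'] ≠ [b, b']) :
    ∃ S, a' :: t₁ = S ++ b' :: t₂ ∧ S.head? = some a' ∧ S.getLast? = some b := by
  obtain _ | ⟨c, X⟩ := X
  · simp_all
  simp only [cons_append, cons.injEq] at h
  refine ⟨X ++ [b], by simp [h.2], ?_, by simp⟩
  cases X <;> simp_all

theorem exists_split_of_isInfix_pair (h₁ : [a, a'] <:+: L) (h₂ : [b, b'] <:+: L)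
    (hne : [a, a'] ≠ [b, b']) :
    ∃ P S Q, L = P ++ S ++ Q ∧
      ((P.getLast? = some a ∧ S.head? = some a' ∧ S.getLast? = some b ∧ Q.head? = some b') ∨
        (P.getLast? = some b ∧ S.head? = some b' ∧ S.getLast? = some a ∧ Q.head? = some a')) := by
  obtain ⟨s₁, t₁, rfl⟩ := h₁
  obtain ⟨s₂, t₂, h⟩ := h₂
  simp only [append_assoc, cons_append, nil_append] at h ⊢
  rcases append_eq_append_iff.1 h with ⟨X, rfl, hX⟩ | ⟨X, rfl, hX⟩
  · obtain ⟨S, hS, hS'⟩ := exists_split_of_cons_cons_eq hX hne.symm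
    exact ⟨s₂ ++ [b], S, a' :: t₁, by simp [← hS, hX], Or.inr (by simpa using hS')⟩
  · obtain ⟨S, hS, hS'⟩ := exists_split_of_cons_cons_eq hX hne
    exact ⟨s₁ ++ [a], S, b' :: t₂, by simp [hS], Or.inl (by simpa using hS')⟩

theorem Nodup.eq_of_isInfix_pair (hL : L.Nodup) (h₁ : [a, b] <:+: L) (h₂ : [a', b] <:+: L) :
    a = a' := by
  by_contra hne
  obtain ⟨P, S, Q, rfl, ⟨-, hS, -, hQ⟩ | ⟨-, hS, -, hQ⟩⟩ :=
    exists_split_of_isInfix_pair h₁ h₂ (by simp [hne])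
  all_goals
    exact (nodup_append.1 hL).2.2 b (mem_append_right P (mem_of_mem_head? hS)) b
      (mem_of_mem_head? hQ) rfl

theorem Nodup.card_le_card_add_one_of_isInfix_pair [DecidableEq α] {v : α} {A T : Finset α}
    (hL : L.Nodup) (hv : L.getLast? = some v) (hA : ∀ a ∈ A, a ∈ L)
    (hT : ∀ a ∈ A, ∀ b, [a, b] <:+: L → b ∈ T) : #A ≤ #T + 1 := by
  have hsucc : #(A.erase v) ≤ #T := by
    refine Finset.card_le_card_of_forall_subsingleton (fun a b => [a, b] <:+: L) ?_ ?_
    · intro a ha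
      obtain ⟨b, hb⟩ := exists_isInfix_pair_of_mem (hA a (Finset.mem_of_mem_erase ha))
        (by simpa [hv] using (Finset.ne_of_mem_erase ha).symm)
      exact ⟨b, hT a (Finset.mem_of_mem_erase ha) b hb, hb⟩
    · intro b _ a₁ h₁ a₂ h₂
      exact hL.eq_of_isInfix_pair h₁.2 h₂.2
  have := Finset.pred_card_le_card_erase (s := A) (a := v)
  omega

theorem IsChain.reroute {R : α → α → Prop} [Std.Symm R] {P S Q M : List α}
    (h : (P ++ S ++ Q).IsChain R) (hM : M.IsChain R) (hM₀ : M ≠ [])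
    (hPM : ∀ x ∈ P.getLast?, ∀ y ∈ M.head?, R x y)
    (hMS : ∀ x ∈ M.getLast?, ∀ y ∈ (S.reverse ++ Q).head?, R x y)
    (hSQ : ∀ x ∈ S.head?, ∀ y ∈ Q.head?, R x y) :
    (P ++ M ++ (S.reverse ++ Q)).IsChain R := by
  have hS : S.reverse.IsChain R :=
    isChain_reverse.2 (h.left_of_append.right_of_append.imp fun _ _ => Std.Symm.symm _ _)
  refine (h.left_of_append.left_of_append.append hM hPM).append
    (hS.append h.right_of_append (by simpa using hSQ)) ?_
  rwa [getLast?_append_of_ne_nil _ hM₀]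

end List

namespace SimpleGraph

variable {V : Type*} {G : SimpleGraph V} {u v w x y a b a' b' : V} {L : List V}

-- Paths are handled as vertex lists, where cutting, reversing and splicing segments is easy.
structure IsPathList (G : SimpleGraph V) (u v : V) (L : List V) : Prop where
  isChain : L.IsChain G.Adj
  nodup : L.Nodup
  head?_eq : L.head? = some u
  getLast?_eq : L.getLast? = some v

def IsLongestPathList (G : SimpleGraph V) (u v : V) (L : List V) : Prop :=
  G.IsPathList u v L ∧ ∀ L', G.IsPathList u v L' → L'.length ≤ L.length

theorem IsPathList.ne_nil (hL : G.IsPathList u v L) : L ≠ [] := by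
  rintro rfl
  simpa using hL.head?_eq

theorem Walk.IsPath.isPathList_support {p : G.Walk u v} (hp : p.IsPath) :
    G.IsPathList u v p.support where
  isChain := p.isChain_adj_support
  nodup := hp.support_nodup
  head?_eq := by cases p <;> simp
  getLast?_eq := by rw [List.getLast?_eq_some_getLast p.support_ne_nil, p.getLast_support]

theorem IsPathList.exists_walk (hL : G.IsPathList u v L) :
    ∃ p : G.Walk u v, p.IsPath ∧ p.support = L := by
  have hu : L.head hL.ne_nil = u := by simpa [List.head?_eq_some_head hL.ne_nil] using hL.head?_eq
  have hv : L.getLast hL.ne_nil = v := by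
    simpa [List.getLast?_eq_some_getLast hL.ne_nil] using hL.getLast?_eq
  refine ⟨(Walk.ofSupport L hL.ne_nil hL.isChain).copy hu hv, ?_, by simp⟩
  rw [Walk.isPath_def]
  simpa using hL.nodup

theorem exists_isLongestPathList [Fintype V] (h : G.Reachable u v) :
    ∃ L, G.IsLongestPathList u v L := by
  classical
  obtain ⟨p⟩ := h
  have hfin : {L | G.IsPathList u v L}.Finite :=
    (List.finite_length_le V (Fintype.card V)).subset fun L hL => hL.nodup.length_le_card
  obtain ⟨L, hL, hmax⟩ :=
    Set.exists_max_image _ List.length hfin ⟨_, p.bypass_isPath.isPathList_support⟩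
  exact ⟨L, hL, hmax⟩

def reachableAvoiding (G : SimpleGraph V) (K : Set V) (w : V) : Set V :=
  {x | ∃ q : G.Walk w x, ∀ z ∈ q.support, z ∉ K}

section reachableAvoiding

variable {K : Set V}

theorem mem_reachableAvoiding_self (hw : w ∉ K) : w ∈ G.reachableAvoiding K w :=
  ⟨.nil, by simpa using hw⟩

theorem notMem_of_mem_reachableAvoiding (hx : x ∈ G.reachableAvoiding K w) : x ∉ K :=
  let ⟨q, hq⟩ := hx
  hq x q.end_mem_support

theorem mem_reachableAvoiding_of_adj (hx : x ∈ G.reachableAvoiding K w) (hxy : G.Adj x y)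
    (hy : y ∉ K) : y ∈ G.reachableAvoiding K w := by
  obtain ⟨q, hq⟩ := hx
  refine ⟨q.concat hxy, fun z hz => ?_⟩
  rw [Walk.support_concat, List.mem_append, List.mem_singleton] at hz
  rcases hz with hz | rfl
  exacts [hq z hz, hy]

theorem exists_isPathList_of_mem_reachableAvoiding (hx : x ∈ G.reachableAvoiding K w)
    (hy : y ∈ G.reachableAvoiding K w) : ∃ M, G.IsPathList x y M ∧ ∀ z ∈ M, z ∉ K := by
  classical
  obtain ⟨q₁, hq₁⟩ := hx
  obtain ⟨q₂, hq₂⟩ := hy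
  refine ⟨_, (q₁.reverse.append q₂).bypass_isPath.isPathList_support, fun z hz => ?_⟩
  have := (q₁.reverse.append q₂).support_bypass_subset_support hz
  rw [Walk.mem_support_append_iff, Walk.support_reverse, List.mem_reverse] at this
  exact this.elim (hq₁ z) (hq₂ z)

end reachableAvoiding

theorem Connected.compl_subset_of_forall_adj {A H : Set V} (hc : (G.induce Aᶜ).Connected)
    (hH : (H \ A).Nonempty) (hclosed : ∀ x ∈ H, ∀ y, G.Adj x y → y ∉ A → y ∈ H) : Aᶜ ⊆ H := by
  obtain ⟨w, hwH, hwA⟩ := hH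
  intro x hx
  obtain ⟨p⟩ := hc.preconnected ⟨w, hwA⟩ ⟨x, hx⟩
  suffices ∀ {c d : ↥Aᶜ} (p : (G.induce Aᶜ).Walk c d), c.1 ∈ H → d.1 ∈ H from this p hwH
  intro c d p
  induction p with
  | nil => exact id
  | @cons _ d _ hcd _ ih => exact fun hc => ih (hclosed _ hc _ hcd d.2)

theorem IsKConnected.connected [Fintype V] {k : ℕ} (hk : G.IsKConnected k) (hk₀ : 0 < k) :
    G.Connected := by
  have h := hk.2 ∅ (by simpa using hk₀)
  rw [Finset.coe_empty, Set.compl_empty] at h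
  exact (induceUnivIso G).connected_iff.mp h

/-- `L = P ++ S ++ Q` would be beaten by `P ++ M ++ S.reverse ++ Q`, where `M` is an `x`–`y` path
avoiding `L`. -/
theorem IsLongestPathList.false_of_reroute (hL : G.IsLongestPathList u v L) {H : Set V}
    (hH : ∀ x ∈ H, ∀ y ∈ H, ∃ M, G.IsPathList x y M ∧ ∀ z ∈ M, z ∉ L)
    {P S Q : List V} (hPSQ : L = P ++ S ++ Q) (hQ : Q ≠ []) (hP : P.getLast? = some a)
    (hS : (S.reverse ++ Q).head? = some b) (hSQ : ∀ c ∈ S.head?, ∀ d ∈ Q.head?, G.Adj c d)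
    (hx : x ∈ H) (hy : y ∈ H) (hax : G.Adj a x) (hby : G.Adj b y) : False := by
  classical
  obtain ⟨M, hM, hML⟩ := hH x hx y hy
  have hP₀ : P ≠ [] := by rintro rfl; simp at hP
  have hperm : (P ++ M ++ (S.reverse ++ Q)).Perm (M ++ L) :=
    List.perm_iff_count.2 fun c => by simp only [hPSQ, List.count_append, List.count_reverse]; omega
  have hpath : G.IsPathList u v (P ++ M ++ (S.reverse ++ Q)) := by
    refine ⟨?_, hperm.nodup_iff.2 <| List.nodup_append.2
      ⟨hM.nodup, hL.1.nodup, fun c hc _ hd hcd => hML c hc (hcd ▸ hd)⟩, ?_, ?_⟩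
    · have := G.symm
      refine (hPSQ ▸ hL.1.isChain).reroute hM.isChain hM.ne_nil ?_ ?_ hSQ
      · simpa [hP, hM.head?_eq] using hax
      · simpa [hS, hM.getLast?_eq] using hby.symm
    · rw [List.append_assoc, List.head?_append_of_ne_nil _ hP₀, ← hL.1.head?_eq, hPSQ,
        List.append_assoc, List.head?_append_of_ne_nil _ hP₀]
    · rw [List.getLast?_append_of_ne_nil _ (by simp [hQ]), List.getLast?_append_of_ne_nil _ hQ,
        ← hL.1.getLast?_eq, hPSQ, List.getLast?_append_of_ne_nil _ hQ]
  have hlong := hperm.length_eq ▸ hL.2 _ hpath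
  have hM₀ := List.length_pos_iff.2 hM.ne_nil
  rw [List.length_append] at hlong
  omega

theorem IsLongestPathList.false_of_isInfix_of_adj (hL : G.IsLongestPathList u v L) {H : Set V}
    (hH : ∀ x ∈ H, ∀ y ∈ H, ∃ M, G.IsPathList x y M ∧ ∀ z ∈ M, z ∉ L)
    (hab : [a, b] <:+: L) (hx : x ∈ H) (hy : y ∈ H) (hax : G.Adj a x) (hby : G.Adj b y) :
    False := by
  obtain ⟨s, t, rfl⟩ := hab
  exact hL.false_of_reroute hH (P := s ++ [a]) (S := []) (Q := b :: t) (by simp) (by simp)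
    (by simp) (by simp) (by simp) hx hy hax hby

theorem IsLongestPathList.not_adj_of_isInfix (hL : G.IsLongestPathList u v L) {H : Set V}
    (hH : ∀ x ∈ H, ∀ y ∈ H, ∃ M, G.IsPathList x y M ∧ ∀ z ∈ M, z ∉ L)
    (ha : [a, a'] <:+: L) (hb : [b, b'] <:+: L) (hx : x ∈ H) (hy : y ∈ H)
    (hax : G.Adj a x) (hby : G.Adj b y) : ¬ G.Adj a' b' := by
  intro hab'
  obtain ⟨P, S, Q, hPSQ, ⟨hP, hSa, hSb, hQ⟩ | ⟨hP, hSb, hSa, hQ⟩⟩ :=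
    List.exists_split_of_isInfix_pair ha hb (by simp [hab'.ne])
  · exact hL.false_of_reroute hH hPSQ (by rintro rfl; simp at hQ) hP (by simp [hSb])
      (by simp [hSa, hQ, hab']) hx hy hax hby
  · exact hL.false_of_reroute hH hPSQ (by rintro rfl; simp at hQ) hP (by simp [hSa])
      (by simp [hSb, hQ, hab'.symm]) hy hx hby hax

theorem IsLongestPathList.exists_mem_forall_not_adj (hL : G.IsLongestPathList u v L) {H : Set V}
    (hH : ∀ x ∈ H, ∀ y ∈ H, ∃ M, G.IsPathList x y M ∧ ∀ z ∈ M, z ∉ L) (huv : u ≠ v) :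
    ∃ c ∈ L, ∀ x ∈ H, ¬ G.Adj c x := by
  obtain ⟨u', hu'⟩ := List.exists_isInfix_pair_of_mem (List.mem_of_mem_head? hL.1.head?_eq)
    (by simp [hL.1.getLast?_eq, huv.symm])
  by_contra! h
  obtain ⟨x, hx, hux⟩ := h u (List.mem_of_mem_head? hL.1.head?_eq)
  obtain ⟨y, hy, hu'y⟩ := h u' (hu'.mem (by simp))
  exact hL.false_of_isInfix_of_adj hH hu' hx hy hux hu'y

theorem IsLongestPathList.isIndependentSet_insert [DecidableEq V]
    (hL : G.IsLongestPathList u v L) {H : Set V}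
    (hH : ∀ x ∈ H, ∀ y ∈ H, ∃ M, G.IsPathList x y M ∧ ∀ z ∈ M, z ∉ L) (hw : w ∈ H)
    {T : Finset V} (hT : ∀ b ∈ T, ∃ a, [a, b] <:+: L ∧ ∃ x ∈ H, G.Adj a x) :
    G.IsIndependentSet (insert w T) := by
  have hwT : ∀ b ∈ T, ¬ G.Adj w b := fun b hb hwb => by
    obtain ⟨a, hab, x, hx, hax⟩ := hT b hb
    exact hL.false_of_isInfix_of_adj hH hab hx hw hax hwb.symm
  simp only [IsIndependentSet, Finset.mem_insert]
  rintro c (rfl | hc) d (rfl | hd)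
  · exact G.loopless.irrefl _
  · exact hwT d hd
  · exact fun h => hwT c hc h.symm
  · obtain ⟨a, hac, x, hx, hax⟩ := hT c hc
    obtain ⟨b, hbd, y, hy, hby⟩ := hT d hd
    exact hL.not_adj_of_isInfix hH hac hbd hx hy hax hby

theorem IsLongestPathList.exists_isIndependentSet_card_le [DecidableEq V]
    (hL : G.IsLongestPathList u v L) {H : Set V}
    (hH : ∀ x ∈ H, ∀ y ∈ H, ∃ M, G.IsPathList x y M ∧ ∀ z ∈ M, z ∉ L) (hw : w ∈ H) (hwL : w ∉ L)
    {A : Finset V} (hA : ∀ a, a ∈ A ↔ a ∈ L ∧ ∃ x ∈ H, G.Adj a x) :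
    ∃ s, G.IsIndependentSet s ∧ #A ≤ #s := by
  classical
  set T := L.toFinset.filter fun b => ∃ a ∈ A, [a, b] <:+: L
  refine ⟨insert w T, hL.isIndependentSet_insert hH hw fun b hb => ?_, ?_⟩
  · obtain ⟨a, ha, hab⟩ := (Finset.mem_filter.1 hb).2
    exact ⟨a, hab, ((hA a).1 ha).2⟩
  · have := hL.1.nodup.card_le_card_add_one_of_isInfix_pair (T := T) hL.1.getLast?_eq
      (fun a ha => ((hA a).1 ha).1) fun a ha b hab =>
        Finset.mem_filter.2 ⟨List.mem_toFinset.2 (hab.mem (by simp)), a, ha, hab⟩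
    rw [Finset.card_insert_of_notMem fun h => hwL (List.mem_toFinset.1 (Finset.mem_filter.1 h).1)]
    omega

theorem IsLongestPathList.le_card_of_isKConnected [Fintype V] {k : ℕ}
    (hL : G.IsLongestPathList u v L) (hk : G.IsKConnected k) (huv : u ≠ v) (hwL : w ∉ L)
    {A : Finset V} (hA : ∀ a, a ∈ A ↔ a ∈ L ∧ ∃ x ∈ G.reachableAvoiding {z | z ∈ L} w, G.Adj a x) :
    k ≤ #A := by
  by_contra! hAk
  obtain ⟨c, hcL, hc⟩ := hL.exists_mem_forall_not_adj
    (fun x hx y hy => exists_isPathList_of_mem_reachableAvoiding hx hy) huv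
  have hsub := (hk.2 A hAk).compl_subset_of_forall_adj (H := G.reachableAvoiding {z | z ∈ L} w)
    ⟨w, mem_reachableAvoiding_self hwL, fun hwA => hwL ((hA w).1 hwA).1⟩
    fun x hx y hxy hyA => mem_reachableAvoiding_of_adj hx hxy fun hyL =>
      hyA ((hA y).2 ⟨hyL, x, hx, hxy.symm⟩)
  have hcA : c ∉ A := fun hcA => by
    obtain ⟨x, hx, hcx⟩ := ((hA c).1 hcA).2
    exact hc x hx hcx
  exact notMem_of_mem_reachableAvoiding (hsub hcA) hcL

end SimpleGraph

theorem chvatal_erdos_hamiltonian_connected_general (G : SimpleGraph V) (k : ℕ)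
    (hk : G.IsKConnected k)
    (hα : ∀ s : Finset V, G.IsIndependentSet s → s.card ≤ k - 1) :
    G.IsHamiltonianConnected := by
  classical
  intro u v huv
  have hk₀ : 0 < k := by
    have := hα {u} (by simp [IsIndependentSet])
    rw [Finset.card_singleton] at this
    omega
  obtain ⟨L, hL⟩ := exists_isLongestPathList ((hk.connected hk₀).preconnected u v)
  by_cases hcover : ∀ x, x ∈ L
  · obtain ⟨p, hp, rfl⟩ := hL.1.exists_walk
    exact ⟨p, hp.isHamiltonian_of_mem hcover⟩
  obtain ⟨w, hw⟩ := not_forall.1 hcover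
  set H := G.reachableAvoiding {z | z ∈ L} w
  set A : Finset V := {a | a ∈ L ∧ ∃ x ∈ H, G.Adj a x}
  have hA : ∀ a, a ∈ A ↔ a ∈ L ∧ ∃ x ∈ H, G.Adj a x := by simp [A]
  obtain ⟨s, hs, hAs⟩ := hL.exists_isIndependentSet_card_le
    (fun x hx y hy => exists_isPathList_of_mem_reachableAvoiding hx hy)
    (mem_reachableAvoiding_self hw) hw hA
  have := hL.le_card_of_isKConnected hk huv hw hA
  have := hα s hs
  omega

theorem chvatal_erdos_hamiltonian_connected (G : SimpleGraph V) (k : ℕ)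
    (hn : 3 ≤ Fintype.card V) (hk : G.IsKConnected k)
    (hα : ∀ s : Finset V, G.IsIndependentSet s → s.card ≤ k - 1) :
    G.IsHamiltonianConnected :=
  chvatal_erdos_hamiltonian_connected_general G k hk hα
end

section
/- Let G be a graph on n vertices with an independent set X of size m, 1 ≤ m < n, such that every vertex of X has degree at least δ. Then the Laplacian spectral radius satisfies μ₁(G) ≥ (1/m + 1/(n−m)) · (sum of degrees of vertices in X) ≥ (1/m + 1/(n−m)) · m·δ = nδ/(n−m). -/
open SimpleGraph Finset Matrix

variable {V : Type*} [Fintype V] [DecidableEq V]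

lemma dp_sum' {n ι : Type*} [Fintype n] [Fintype ι] (v : n → ℝ) (f : ι → n → ℝ) :
    v ⬝ᵥ (∑ i, f i) = ∑ i, v ⬝ᵥ f i := by
  simp only [dotProduct, Finset.sum_apply, Finset.mul_sum]
  exact Finset.sum_comm

lemma rayleigh_le_iSup_eigenvalues {n : Type*} [Fintype n] [DecidableEq n] [Nonempty n]
    {A : Matrix n n ℝ} (hA : A.IsHermitian) (x : n → ℝ) :
    x ⬝ᵥ A *ᵥ x ≤ (⨆ i, hA.eigenvalues i) * (x ⬝ᵥ x) := by
  set μ := ⨆ i, hA.eigenvalues i with hμ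
  set b := hA.eigenvectorBasis with hb
  set r : n → ℝ := fun i => b.repr (WithLp.toLp 2 x) i with hr
  have hx : x = ∑ i, r i • ⇑(b i) := by
    have h := b.sum_repr (WithLp.toLp 2 x)
    have := congrArg (fun (v : EuclideanSpace ℝ n) => (v : n → ℝ)) h
    simpa using this.symm
  have hdot : ∀ i, x ⬝ᵥ ⇑(b i) = r i := by
    intro i
    have : r i = inner ℝ (b i) (WithLp.toLp 2 x) := b.repr_apply_apply (WithLp.toLp 2 x) i
    rw [this]
    simp [PiLp.inner_apply, dotProduct, mul_comm]
  have hmv : A *ᵥ x = ∑ i, (r i * hA.eigenvalues i) • ⇑(b i) := by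
    conv_lhs => rw [hx]
    rw [← A.mulVecLin_apply, map_sum]
    refine Finset.sum_congr rfl (fun i _ => ?_)
    rw [_root_.map_smul, A.mulVecLin_apply, hA.mulVec_eigenvectorBasis, smul_smul]
  have h1 : x ⬝ᵥ A *ᵥ x = ∑ i, hA.eigenvalues i * (r i * r i) := by
    rw [hmv, dp_sum']
    refine Finset.sum_congr rfl (fun i _ => ?_)
    rw [dotProduct_smul, hdot]
    simp only [smul_eq_mul]; ring
  have h2 : x ⬝ᵥ x = ∑ i, r i * r i := by
    conv_lhs => rw [show x ⬝ᵥ x = x ⬝ᵥ (∑ i, r i • ⇑(b i)) by rw [← hx]]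
    rw [dp_sum']
    refine Finset.sum_congr rfl (fun i _ => ?_)
    rw [dotProduct_smul, hdot]; simp [mul_comm]
  rw [h1, h2, Finset.mul_sum]
  refine Finset.sum_le_sum (fun i _ => ?_)
  have hle : hA.eigenvalues i ≤ μ := le_ciSup (Set.Finite.bddAbove (Set.finite_range _)) i
  nlinarith [mul_self_nonneg (r i)]

theorem lap_interlacing_bound (G : SimpleGraph V) [DecidableRel G.Adj]
    (X : Finset V) (m δ : ℕ)
    (hX : G.IsIndependentSet X) (hXm : X.card = m)
    (hm : 1 ≤ m) (hmn : m < Fintype.card V)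
    (hdeg : ∀ u ∈ X, δ ≤ G.degree u) :
    (1 / (m : ℝ) + 1 / ((Fintype.card V : ℝ) - m)) * (∑ u ∈ X, (G.degree u : ℝ)) ≤
        lapSpecRad G ∧
      (Fintype.card V : ℝ) * (δ : ℝ) / ((Fintype.card V : ℝ) - m) ≤
        (1 / (m : ℝ) + 1 / ((Fintype.card V : ℝ) - m)) *
          (∑ u ∈ X, (G.degree u : ℝ)) := by
  classical
  set n := Fintype.card V with hn
  have hmR : (0:ℝ) < m := by exact_mod_cast hm
  have hmnR : (m:ℝ) < n := by exact_mod_cast hmn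
  have hnmR : (0:ℝ) < (n:ℝ) - m := by linarith
  have hnR : (0:ℝ) < n := by linarith
  have hne : Nonempty V := Fintype.card_pos_iff.mp (by omega)
  set D := ∑ u ∈ X, (G.degree u : ℝ) with hD
  have hDnn : 0 ≤ D := Finset.sum_nonneg fun u _ => by positivity
  constructor
  · -- first inequality
    set x : V → ℝ := fun v => if v ∈ X then ((n:ℝ) - m) else -(m:ℝ) with hxdef
    have hf : ∀ i ∈ X, ∑ j, (if G.Adj i j then (x i - x j)^2 else 0)
        = (G.degree i : ℝ) * (n:ℝ)^2 := by
      intro i hi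
      rw [← Finset.sum_filter, (G.neighborFinset_eq_filter).symm]
      rw [Finset.sum_congr rfl (fun j hj => show (x i - x j)^2 = (n:ℝ)^2 by
        rw [SimpleGraph.mem_neighborFinset] at hj
        have hjX : j ∉ X := fun hjX => hX i hi j hjX hj
        simp only [hxdef, if_pos hi, if_neg hjX]
        ring)]
      rw [Finset.sum_const, SimpleGraph.card_neighborFinset_eq_degree, nsmul_eq_mul]
    have hS : (∑ i : V, ∑ j : V, if G.Adj i j then (x i - x j)^2 else 0)
        = 2 * ((n:ℝ)^2 * D) := by
      rw [← Finset.sum_add_sum_compl X]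
      have hA1 : ∑ i ∈ X, ∑ j, (if G.Adj i j then (x i - x j)^2 else 0) = (n:ℝ)^2 * D := by
        rw [Finset.sum_congr rfl hf, hD, Finset.mul_sum]
        exact Finset.sum_congr rfl fun i _ => by ring
      have hA2 : ∑ i ∈ Xᶜ, ∑ j, (if G.Adj i j then (x i - x j)^2 else 0) = (n:ℝ)^2 * D := by
        have hstep : ∀ i ∈ Xᶜ, ∑ j, (if G.Adj i j then (x i - x j)^2 else 0)
            = ∑ j ∈ X, (if G.Adj i j then (x i - x j)^2 else 0) := by
          intro i hi
          rw [Finset.mem_compl] at hi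
          rw [← Finset.sum_add_sum_compl X (fun j => if G.Adj i j then (x i - x j)^2 else 0)]
          have : ∑ j ∈ Xᶜ, (if G.Adj i j then (x i - x j)^2 else 0) = 0 := by
            refine Finset.sum_eq_zero fun j hj => ?_
            rw [Finset.mem_compl] at hj
            simp only [hxdef, if_neg hi, if_neg hj]
            simp
          rw [this, add_zero]
        rw [Finset.sum_congr rfl hstep, Finset.sum_comm]
        have hcol : ∀ j ∈ X, ∑ i ∈ Xᶜ, (if G.Adj i j then (x i - x j)^2 else 0)
            = (G.degree j : ℝ) * (n:ℝ)^2 := by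
          intro j hj
          have hall : ∑ i : V, (if G.Adj i j then (x i - x j)^2 else 0)
              = (G.degree j : ℝ) * (n:ℝ)^2 := by
            have hswap : ∑ i : V, (if G.Adj i j then (x i - x j)^2 else 0)
                = ∑ i : V, (if G.Adj j i then (x j - x i)^2 else 0) :=
              Finset.sum_congr rfl fun i _ => if_congr (G.adj_comm i j) (by ring) rfl
            rw [hswap]
            exact hf j hj
          rw [← Finset.sum_add_sum_compl X
            (fun i => if G.Adj i j then (x i - x j)^2 else 0)] at hall
          have hz : ∑ i ∈ X, (if G.Adj i j then (x i - x j)^2 else 0) = 0 :=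
            Finset.sum_eq_zero fun i hi => by rw [if_neg (hX i hi j hj)]
          rw [hz, zero_add] at hall
          exact hall
        rw [Finset.sum_congr rfl hcol, hD, Finset.mul_sum]
        exact Finset.sum_congr rfl fun i _ => by ring
      rw [hA1, hA2]; ring
    have hQ : x ⬝ᵥ (G.lapMatrix ℝ) *ᵥ x = (n:ℝ)^2 * D := by
      rw [← Matrix.toLinearMap₂'_apply', G.lapMatrix_toLinearMap₂' (R := ℝ), hS]
      ring
    have hxx : x ⬝ᵥ x = (m:ℝ) * ((n:ℝ) - m) * n := by
      have hcc : (Xᶜ : Finset V).card = n - m := by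
        rw [Finset.card_compl, hXm]
      rw [dotProduct, ← Finset.sum_add_sum_compl X]
      have e1 : ∑ v ∈ X, x v * x v = (m:ℝ) * (((n:ℝ) - m) * ((n:ℝ) - m)) := by
        have hpt : ∀ v ∈ X, x v * x v = ((n:ℝ) - m) * ((n:ℝ) - m) :=
          fun v hv => by simp only [hxdef, if_pos hv]
        rw [Finset.sum_congr rfl hpt, Finset.sum_const, hXm, nsmul_eq_mul]
      have e2 : ∑ v ∈ Xᶜ, x v * x v = ((n:ℝ) - m) * ((m:ℝ) * m) := by
        have hpt : ∀ v ∈ Xᶜ, x v * x v = (m:ℝ) * m := fun v hv => by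
          rw [Finset.mem_compl] at hv
          simp only [hxdef, if_neg hv]
          ring
        rw [Finset.sum_congr rfl hpt, Finset.sum_const, hcc, nsmul_eq_mul,
          Nat.cast_sub (le_of_lt hmn)]
      rw [e1, e2]; ring
    have hray := rayleigh_le_iSup_eigenvalues (lapHerm G) x
    rw [hQ, hxx] at hray
    have hμ : (⨆ i, (lapHerm G).eigenvalues i) = lapSpecRad G := rfl
    rw [hμ] at hray
    have heq : (1 / (m:ℝ) + 1 / ((n:ℝ) - m)) * D = (n:ℝ) * D / ((m:ℝ) * ((n:ℝ) - m)) := by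
      field_simp
      ring
    rw [heq, div_le_iff₀ (by positivity)]
    nlinarith [hray, hnR]
  · -- second inequality
    have hDlb : (m:ℝ) * δ ≤ D := by
      have : (m:ℝ) * δ = ∑ _u ∈ X, (δ:ℝ) := by
        rw [Finset.sum_const, hXm, nsmul_eq_mul]
      rw [this]
      exact Finset.sum_le_sum fun u hu => by exact_mod_cast hdeg u hu
    have heq : (n:ℝ) * δ / ((n:ℝ) - m) = (1 / (m:ℝ) + 1 / ((n:ℝ) - m)) * ((m:ℝ) * δ) := by
      field_simp
      ring
    rw [heq]
    have hpos : 0 ≤ 1 / (m:ℝ) + 1 / ((n:ℝ) - m) :=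
      add_nonneg (le_of_lt (by positivity)) (le_of_lt (one_div_pos.mpr hnmR))
    exact mul_le_mul_of_nonneg_left hDlb hpos
end
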